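/- arXiv:2210.17150 — 8 statements merged into one kernel-verified Lean document; each statement's English description precedes it below -/
import Mathlib

section
/- Let f : ℝ₊^k → ℝ be convex. Then f is supermodular (f(x) + f(y) ≤ f(x ∨ y) + f(x ∧ y) for all x, y, where ∨ and ∧ are coordinatewise max and min) if and only if f is ultramodular, i.e., f(x + d²) − f(x) ≤ f(x + d¹ + d²) − f(x + d¹) for all x and all d¹, d² ≥ 0 with all relevant points in ℝ₊^k. -/
section aux

variable {k : ℕ} {f : (Fin k → ℝ) → ℝ}

/-- Convexity gives ultramodularity along a common ray. -/
lemma usm_conv (hconv : ConvexOn ℝ {x : Fin k → ℝ | 0 ≤ x} f)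
    (x e : Fin k → ℝ) (hx : 0 ≤ x) (he : 0 ≤ e) {s t : ℝ} (hs : 0 ≤ s) (ht : 0 ≤ t) :
    f (x + t • e) + f (x + s • e) ≤ f (x + (s + t) • e) + f x := by
  rcases eq_or_lt_of_le (by linarith : (0:ℝ) ≤ s + t) with h0 | h0
  · have hs0 : s = 0 := by linarith
    have ht0 : t = 0 := by linarith
    simp [hs0, ht0]
  · have hc : s + t ≠ 0 := ne_of_gt h0
    have hxmem : x ∈ {x : Fin k → ℝ | 0 ≤ x} := hx
    have hymem : x + (s + t) • e ∈ {x : Fin k → ℝ | 0 ≤ x} := by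
      simp only [Set.mem_setOf_eq, Pi.le_def] at hx ⊢
      intro i
      have h1 := he i
      have h2 := hx i
      simp only [Pi.add_apply, Pi.smul_apply, smul_eq_mul, Pi.zero_apply] at *
      nlinarith
    have key : ∀ r : ℝ, 0 ≤ r → r ≤ s + t →
        f (x + r • e) ≤ (1 - r / (s + t)) * f x + (r / (s + t)) * f (x + (s + t) • e) := by
      intro r hr hrc
      have heq : (1 - r / (s + t)) • x + (r / (s + t)) • (x + (s + t) • e) = x + r • e := by
        funext i
        simp only [Pi.add_apply, Pi.smul_apply, smul_eq_mul]
        field_simp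
        ring
      have := hconv.2 hxmem hymem
        (show (0:ℝ) ≤ 1 - r / (s + t) by
          rw [sub_nonneg]; exact (div_le_one h0).2 hrc)
        (show (0:ℝ) ≤ r / (s + t) by positivity) (by ring)
      rwa [heq] at this
    have h1 := key t ht (by linarith)
    have h2 := key s hs (by linarith)
    have h3 : t / (s + t) + s / (s + t) = 1 := by field_simp; ring
    have h4 : (1 - t / (s + t)) * f x + t / (s + t) * f (x + (s + t) • e)
        + ((1 - s / (s + t)) * f x + s / (s + t) * f (x + (s + t) • e))
        = f x + f (x + (s + t) • e) := by
      have hmu : s / (s + t) = 1 - t / (s + t) := by linarith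
      rw [hmu]; ring
    linarith

/-- Supermodularity gives ultramodularity for disjointly supported directions. -/
lemma usm_disjoint
    (hsm : ∀ x y : Fin k → ℝ, 0 ≤ x → 0 ≤ y → f x + f y ≤ f (x ⊔ y) + f (x ⊓ y))
    (x a b : Fin k → ℝ) (hx : 0 ≤ x) (ha : 0 ≤ a) (hb : 0 ≤ b)
    (hdisj : ∀ i, a i = 0 ∨ b i = 0) :
    f (x + b) + f (x + a) ≤ f (x + a + b) + f x := by
  have hxa : (0:Fin k → ℝ) ≤ x + a := add_nonneg hx ha
  have hxb : (0:Fin k → ℝ) ≤ x + b := add_nonneg hx hb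
  have hsup : (x + a) ⊔ (x + b) = x + a + b := by
    funext i
    have h1 := ha i
    have h2 := hb i
    simp only [Pi.sup_apply, Pi.add_apply, Pi.zero_apply] at *
    rcases hdisj i with h | h
    · simp only [h, add_zero]; exact max_eq_right (by linarith)
    · simp only [h, add_zero]; exact max_eq_left (by linarith)
  have hinf : (x + a) ⊓ (x + b) = x := by
    funext i
    have h1 := ha i
    have h2 := hb i
    simp only [Pi.inf_apply, Pi.add_apply, Pi.zero_apply] at *
    rcases hdisj i with h | h
    · simp only [h, add_zero]; exact min_eq_left (by linarith)
    · simp only [h, add_zero]; exact min_eq_right (by linarith)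
  have := hsm (x + a) (x + b) hxa hxb
  rw [hsup, hinf] at this
  linarith

end aux

/-- For a convex function on the nonnegative orthant ℝ₊^k, supermodularity
(`f(x) + f(y) ≤ f(x ∨ y) + f(x ∧ y)`) is equivalent to ultramodularity
(`f(x + d²) − f(x) ≤ f(x + d¹ + d²) − f(x + d¹)` for all `d¹, d² ≥ 0`). -/
theorem convex_supermodular_iff_ultramodular {k : ℕ} (f : (Fin k → ℝ) → ℝ)
    (hconv : ConvexOn ℝ {x : Fin k → ℝ | 0 ≤ x} f) :
    (∀ x y : Fin k → ℝ, 0 ≤ x → 0 ≤ y → f x + f y ≤ f (x ⊔ y) + f (x ⊓ y)) ↔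
      (∀ x d₁ d₂ : Fin k → ℝ, 0 ≤ x → 0 ≤ d₁ → 0 ≤ d₂ →
        f (x + d₂) - f x ≤ f (x + d₁ + d₂) - f (x + d₁)) := by
  constructor
  · intro hsm
    -- Step 1: the case where d₁ is supported on a single coordinate.
    have single_case : ∀ (i : Fin k) (s : ℝ), 0 ≤ s → ∀ x d₂ : Fin k → ℝ, 0 ≤ x → 0 ≤ d₂ →
        f (x + d₂) + f (x + Pi.single i s) ≤ f (x + Pi.single i s + d₂) + f x := by
      intro i s hs x d₂ hx hd₂
      set p : Fin k → ℝ := Pi.single i (d₂ i) with hp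
      set b : Fin k → ℝ := Function.update d₂ i 0 with hb
      have hpb : p + b = d₂ := by
        funext j
        by_cases hj : j = i
        · subst hj; simp [hp, hb]
        · simp [hp, hb, Function.update_of_ne hj, Pi.single_eq_of_ne hj]
      have hpnn : (0:Fin k → ℝ) ≤ p := by
        intro j
        by_cases hj : j = i
        · subst hj; simpa [hp] using hd₂ j
        · simp [hp, Pi.single_eq_of_ne hj]
      have hbnn : (0:Fin k → ℝ) ≤ b := by
        intro j
        by_cases hj : j = i
        · subst hj; simp [hb]
        · simpa [hb, Function.update_of_ne hj] using hd₂ j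
      have hsnn : (0:Fin k → ℝ) ≤ Pi.single i s := by
        intro j
        by_cases hj : j = i
        · subst hj; simpa using hs
        · simp [Pi.single_eq_of_ne hj]
      -- same-coordinate part, via convexity
      have hone : (0:Fin k → ℝ) ≤ Pi.single i (1:ℝ) := by
        intro j
        by_cases hj : j = i
        · subst hj; simp
        · simp [Pi.single_eq_of_ne hj]
      have hsingle_smul : ∀ r : ℝ, r • (Pi.single i (1:ℝ) : Fin k → ℝ) = Pi.single i r := by
        intro r
        funext j
        by_cases hj : j = i
        · subst hj; simp
        · simp [Pi.single_eq_of_ne hj]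
      have hA := usm_conv hconv x (Pi.single i (1:ℝ)) hx hone hs (hd₂ i)
      rw [hsingle_smul, hsingle_smul, hsingle_smul] at hA
      -- hA : f (x + p) + f (x + single i s) ≤ f (x + single i (s + d₂ i)) + f x
      have hsplit : Pi.single i (s + d₂ i) = Pi.single i s + p := by
        funext j
        by_cases hj : j = i
        · subst hj; simp [hp]
        · simp [hp, Pi.single_eq_of_ne hj]
      rw [hsplit] at hA
      -- disjoint part, via supermodularity
      have hdisj : ∀ j, (Pi.single i s : Fin k → ℝ) j = 0 ∨ b j = 0 := by
        intro j
        by_cases hj : j = i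
        · subst hj; right; simp [hb]
        · left; simp [Pi.single_eq_of_ne hj]
      have hB := usm_disjoint hsm (x + p) (Pi.single i s) b (add_nonneg hx hpnn) hsnn hbnn hdisj
      -- combine
      have e1 : x + p + b = x + d₂ := by rw [add_assoc, hpb]
      have e2 : x + p + Pi.single i s = x + (Pi.single i s + p) := by
        rw [add_assoc, add_comm p]
      have e3 : x + (Pi.single i s + p) + b = x + Pi.single i s + d₂ := by
        rw [← hpb]; abel
      rw [e1, e2, e3] at hB
      linarith
    -- Step 2: induction on the support of d₁.
    have key : ∀ S : Finset (Fin k), ∀ x d₁ d₂ : Fin k → ℝ, 0 ≤ x → 0 ≤ d₁ → 0 ≤ d₂ →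
        (∀ i ∉ S, d₁ i = 0) →
        f (x + d₂) + f (x + d₁) ≤ f (x + d₁ + d₂) + f x := by
      intro S
      induction S using Finset.induction_on with
      | empty =>
        intro x d₁ d₂ hx hd₁ hd₂ hsupp
        have : d₁ = 0 := funext fun i => hsupp i (Finset.notMem_empty i)
        subst this
        simp
      | @insert i S hiS ih =>
        intro x d₁ d₂ hx hd₁ hd₂ hsupp
        set s : Fin k → ℝ := Pi.single i (d₁ i) with hsdef
        set r : Fin k → ℝ := Function.update d₁ i 0 with hrdef
        have hsr : s + r = d₁ := by
          funext j
          by_cases hj : j = i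
          · subst hj; simp [hsdef, hrdef]
          · simp [hsdef, hrdef, Function.update_of_ne hj, Pi.single_eq_of_ne hj]
        have hsnn : (0:Fin k → ℝ) ≤ s := by
          intro j
          by_cases hj : j = i
          · subst hj; simpa [hsdef] using hd₁ j
          · simp [hsdef, Pi.single_eq_of_ne hj]
        have hrnn : (0:Fin k → ℝ) ≤ r := by
          intro j
          by_cases hj : j = i
          · subst hj; simp [hrdef]
          · simpa [hrdef, Function.update_of_ne hj] using hd₁ j
        have hrsupp : ∀ j ∉ S, r j = 0 := by
          intro j hj
          by_cases hji : j = i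
          · subst hji; simp [hrdef]
          · have : j ∉ insert i S := by simp [hji, hj]
            simp [hrdef, Function.update_of_ne hji, hsupp j this]
        have hA := single_case i (d₁ i) (hd₁ i) x d₂ hx hd₂
        rw [← hsdef] at hA
        have hB := ih (x + s) r d₂ (add_nonneg hx hsnn) hrnn hd₂ hrsupp
        have e1 : x + s + r = x + d₁ := by rw [add_assoc, hsr]
        rw [e1] at hB
        linarith
    intro x d₁ d₂ hx hd₁ hd₂
    have := key Finset.univ x d₁ d₂ hx hd₁ hd₂ (fun i hi => absurd (Finset.mem_univ i) hi)
    linarith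
  · intro hum x y hx hy
    have hinfx : x ⊓ y ≤ x := inf_le_left
    have hinfy : x ⊓ y ≤ y := inf_le_right
    have h0 : (0:Fin k → ℝ) ≤ x ⊓ y := le_inf hx hy
    have h1 : (0:Fin k → ℝ) ≤ x - x ⊓ y := by rwa [sub_nonneg]
    have h2 : (0:Fin k → ℝ) ≤ y - x ⊓ y := by rwa [sub_nonneg]
    have := hum (x ⊓ y) (x - x ⊓ y) (y - x ⊓ y) h0 h1 h2
    have e1 : x ⊓ y + (y - x ⊓ y) = y := by abel
    have e2 : x ⊓ y + (x - x ⊓ y) = x := by abel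
    have e3 : x ⊓ y + (x - x ⊓ y) + (y - x ⊓ y) = x ⊔ y := by
      funext i
      have : min (x i) (y i) + max (x i) (y i) = x i + y i := min_add_max _ _
      simp only [Pi.add_apply, Pi.sub_apply, Pi.inf_apply, Pi.sup_apply]
      linarith
    rw [e3, e1, e2] at this
    linarith
end

section
/- Let f : ℝ₊^k → ℝ be an ultramodular function all of whose one-sided directional derivatives f'(x; eⁱ) along unit vectors exist and are finite. Then for every x ∈ ℝ₊^k, f'(x; e) ≥ ∑_{i=1}^k f'(x; eⁱ), where e = (1,...,1). -/
open Filter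

lemma single_one_nonneg {k : ℕ} (i : Fin k) : (0 : Fin k → ℝ) ≤ Pi.single i 1 := by
  intro j
  by_cases h : j = i <;> simp [Pi.single_apply, h]

lemma key_ineq {k : ℕ} (f : (Fin k → ℝ) → ℝ)
    (hult : ∀ x d₁ d₂ : Fin k → ℝ, 0 ≤ x → 0 ≤ d₁ → 0 ≤ d₂ →
      f (x + d₂) - f x ≤ f (x + d₁ + d₂) - f (x + d₁))
    (x : Fin k → ℝ) (hx : 0 ≤ x) (δ : ℝ) (hδ : 0 ≤ δ) (s : Finset (Fin k)) :
    ∑ i ∈ s, (f (x + δ • (Pi.single i 1 : Fin k → ℝ)) - f x)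
      ≤ f (x + δ • ∑ i ∈ s, Pi.single i (1:ℝ)) - f x := by
  induction s using Finset.induction_on with
  | empty => simp
  | @insert a s ha ih =>
    have hs : (0 : Fin k → ℝ) ≤ ∑ i ∈ s, Pi.single i (1:ℝ) :=
      Finset.sum_nonneg fun i _ => single_one_nonneg i
    have h1 : (0 : Fin k → ℝ) ≤ δ • ∑ i ∈ s, Pi.single i (1:ℝ) :=
      smul_nonneg hδ hs
    have h2 : (0 : Fin k → ℝ) ≤ δ • (Pi.single a 1 : Fin k → ℝ) :=
      smul_nonneg hδ (single_one_nonneg a)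
    have hu := hult x (δ • ∑ i ∈ s, Pi.single i (1:ℝ)) (δ • (Pi.single a 1 : Fin k → ℝ)) hx h1 h2
    rw [Finset.sum_insert ha, Finset.sum_insert ha, smul_add]
    have : x + (δ • (Pi.single a 1 : Fin k → ℝ) + δ • ∑ i ∈ s, Pi.single i (1:ℝ))
        = x + δ • ∑ i ∈ s, Pi.single i (1:ℝ) + δ • (Pi.single a 1 : Fin k → ℝ) := by ring
    rw [this]
    linarith

/-- For an ultramodular function `f` on ℝ₊^k whose one-sided directional
derivatives exist (and are finite), `f'(x; e) ≥ ∑ᵢ f'(x; eⁱ)` where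
`e = (1,...,1)`. -/
theorem ultramodular_dirDeriv_sum_le {k : ℕ} (f : (Fin k → ℝ) → ℝ)
    (hult : ∀ x d₁ d₂ : Fin k → ℝ, 0 ≤ x → 0 ≤ d₁ → 0 ≤ d₂ →
      f (x + d₂) - f x ≤ f (x + d₁ + d₂) - f (x + d₁))
    (D : (Fin k → ℝ) → (Fin k → ℝ) → ℝ)
    (hD : ∀ x z : Fin k → ℝ, 0 ≤ x → 0 ≤ z →
      Tendsto (fun δ : ℝ => (f (x + δ • z) - f x) / δ)
        (nhdsWithin 0 (Set.Ioi 0)) (nhds (D x z))) :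
    ∀ x : Fin k → ℝ, 0 ≤ x → (∑ i, D x (Pi.single i 1)) ≤ D x 1 := by
  intro x hx
  have hone : (0 : Fin k → ℝ) ≤ 1 := fun j => zero_le_one
  have hsum : Tendsto (fun δ : ℝ => ∑ i, (f (x + δ • (Pi.single i 1 : Fin k → ℝ)) - f x) / δ)
      (nhdsWithin 0 (Set.Ioi 0)) (nhds (∑ i, D x (Pi.single i 1))) :=
    tendsto_finset_sum _ fun i _ => hD x (Pi.single i 1) hx (single_one_nonneg i)
  refine le_of_tendsto_of_tendsto hsum (hD x 1 hx hone) ?_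
  filter_upwards [self_mem_nhdsWithin] with δ hδ
  have hδ0 : 0 < δ := hδ
  have h := key_ineq f hult x hx δ hδ0.le Finset.univ
  rw [Finset.univ_sum_single] at h
  rw [← Finset.sum_div]
  exact div_le_div_of_nonneg_right h hδ0.le
end

section
/- Let f : ℝ₊^k → ℝ be ultramodular and convex with finite one-sided directional derivatives. Then the map x ↦ ∇⁺f(x) := (f'(x; e¹), ..., f'(x; eᵏ)) is nondecreasing: y ≥ x (coordinatewise) implies ∇⁺f(y) ≥ ∇⁺f(x). -/
open Filter

/-- For an ultramodular convex function `f` on ℝ₊^k with finite one-sided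
directional derivatives, the map `x ↦ ∇⁺f(x) = (f'(x; e¹), ..., f'(x; eᵏ))`
is nondecreasing. -/
theorem ultramodular_gradPlus_monotone {k : ℕ} (f : (Fin k → ℝ) → ℝ)
    (hconv : ConvexOn ℝ {x : Fin k → ℝ | 0 ≤ x} f)
    (hult : ∀ x d₁ d₂ : Fin k → ℝ, 0 ≤ x → 0 ≤ d₁ → 0 ≤ d₂ →
      f (x + d₂) - f x ≤ f (x + d₁ + d₂) - f (x + d₁))
    (D : (Fin k → ℝ) → (Fin k → ℝ) → ℝ)
    (hD : ∀ x z : Fin k → ℝ, 0 ≤ x → 0 ≤ z →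
      Tendsto (fun δ : ℝ => (f (x + δ • z) - f x) / δ)
        (nhdsWithin 0 (Set.Ioi 0)) (nhds (D x z))) :
    ∀ x y : Fin k → ℝ, 0 ≤ x → x ≤ y →
      ∀ i : Fin k, D x (Pi.single i 1) ≤ D y (Pi.single i 1) := by
  intro x y hx hxy i
  set z : Fin k → ℝ := Pi.single i 1 with hzdef
  have hz : 0 ≤ z := by
    intro j
    by_cases h : j = i
    · subst h; simp [hzdef]
    · simp [hzdef, Pi.single_apply, h]
  have hy : 0 ≤ y := le_trans hx hxy
  refine le_of_tendsto_of_tendsto (hD x z hx hz) (hD y z hy hz) ?_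
  filter_upwards [self_mem_nhdsWithin] with δ hδ
  have hδ0 : (0:ℝ) < δ := hδ
  have hdz : 0 ≤ δ • z := smul_nonneg hδ0.le hz
  have hd1 : 0 ≤ y - x := fun j => sub_nonneg.2 (hxy j)
  have := hult x (y - x) (δ • z) hx hd1 hdz
  rw [show x + (y - x) = y by abel] at this
  exact div_le_div_of_nonneg_right this hδ0.le
end

section
/- Let n ≥ 1, let p_A ≥ 0 for all nonempty proper subsets A of an n-element set B, with p nondecreasing (A ⊆ A' implies p_A ≤ p_{A'}). Then ∑_{∅ ≠ A ⊊ B} p_A · (2|A| + 1 − n)/(|A| + 1) ≥ 0. -/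
open Finset

lemma aux_count {α : Type*} [DecidableEq α] (B A : Finset α) (hA : A ⊆ B) (m : ℕ)
    (hc : A.card = m) :
    ((B.powersetCard (m+1)).filter (fun A' => A ⊆ A')).card = B.card - m := by
  have := Finset.card_nbij (s := B \ A)
    (t := (B.powersetCard (m+1)).filter (fun A' => A ⊆ A')) (i := fun x => insert x A)
    (by
      intro x hx
      simp only [mem_coe, mem_sdiff] at hx ⊢
      simp only [mem_filter, mem_powersetCard]
      refine ⟨⟨insert_subset hx.1 hA, ?_⟩, subset_insert _ _⟩
      rw [card_insert_of_notMem hx.2, hc])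
    (by
      intro x hx y hy hxy
      simp only [Set.mem_setOf_eq, coe_sdiff, Set.mem_diff, mem_coe] at hx hy
      by_contra hne
      simp only at hxy
      have : x ∈ insert y A := hxy ▸ mem_insert_self x A
      rcases mem_insert.1 this with h | h
      · exact hne h
      · exact hx.2 h)
    (by
      intro A' hA'
      simp only [coe_filter, Set.mem_setOf_eq, mem_powersetCard] at hA'
      obtain ⟨⟨hsub, hcard⟩, hAA'⟩ := hA'
      have h1 : (A' \ A).card = 1 := by
        rw [card_sdiff_of_subset hAA', hcard, hc]
        omega
      obtain ⟨x, hx⟩ := card_eq_one.1 h1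
      refine ⟨x, ?_, ?_⟩
      · simp only [coe_sdiff, Set.mem_diff, mem_coe]
        have hxA' : x ∈ A' \ A := hx ▸ mem_singleton_self x
        rw [mem_sdiff] at hxA'
        exact ⟨hsub hxA'.1, hxA'.2⟩
      · simp only
        apply Finset.Subset.antisymm
        · exact insert_subset (by
            have : x ∈ A' \ A := hx ▸ mem_singleton_self x
            exact (mem_sdiff.1 this).1) hAA'
        · intro y hy
          by_cases hyA : y ∈ A
          · exact mem_insert_of_mem hyA
          · have : y ∈ A' \ A := mem_sdiff.2 ⟨hy, hyA⟩
            rw [hx, mem_singleton] at this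
            exact this ▸ mem_insert_self y A)
  rw [← this, card_sdiff_of_subset hA, hc]

lemma aux_step {α : Type*} [DecidableEq α] (B : Finset α) (p : Finset α → ℝ)
    (hpos : ∀ A : Finset α, A ⊆ B → 0 ≤ p A)
    (hmono : ∀ A A' : Finset α, A ⊆ A' → A' ⊆ B → p A ≤ p A') (m : ℕ)
    (hm : m + 1 ≤ B.card) :
    ((B.card : ℝ) - m) * ∑ A ∈ B.powersetCard m, p A
      ≤ (m + 1) * ∑ A' ∈ B.powersetCard (m+1), p A' := by
  have key : ((B.card : ℝ) - m) * ∑ A ∈ B.powersetCard m, p A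
      = ∑ A' ∈ B.powersetCard (m+1), ∑ A ∈ A'.powersetCard m, p A := by
    rw [Finset.mul_sum]
    rw [show (∑ A ∈ B.powersetCard m, ((B.card : ℝ) - m) * p A)
        = ∑ A ∈ B.powersetCard m, ∑ A' ∈ B.powersetCard (m+1),
            (if A ⊆ A' then p A else 0) from ?_, Finset.sum_comm]
    · apply Finset.sum_congr rfl
      intro A' hA'
      rw [mem_powersetCard] at hA'
      rw [← Finset.sum_filter]
      congr 1
      ext A
      simp only [mem_filter, mem_powersetCard]
      constructor
      · rintro ⟨⟨_, hc⟩, hs⟩; exact ⟨hs, hc⟩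
      · rintro ⟨hs, hc⟩; exact ⟨⟨hs.trans hA'.1, hc⟩, hs⟩
    · apply Finset.sum_congr rfl
      intro A hA
      rw [mem_powersetCard] at hA
      rw [← Finset.sum_filter, Finset.sum_const, aux_count B A hA.1 m hA.2,
        nsmul_eq_mul, Nat.cast_sub (by omega)]
  rw [key, Finset.mul_sum]
  apply Finset.sum_le_sum
  intro A' hA'
  rw [mem_powersetCard] at hA'
  calc ∑ A ∈ A'.powersetCard m, p A ≤ ∑ A ∈ A'.powersetCard m, p A' := by
        apply Finset.sum_le_sum
        intro A hA
        rw [mem_powersetCard] at hA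
        exact hmono A A' hA.1 hA'.1
    _ = (m + 1) * p A' := by
        rw [Finset.sum_const, card_powersetCard, hA'.2, nsmul_eq_mul]
        have h : (m+1).choose m = m + 1 := by
          rw [← Nat.choose_symm (by omega), show m + 1 - m = 1 by omega, Nat.choose_one_right]
        rw [h]
        push_cast
        ring

/-- For a nonnegative nondecreasing set function `p` on the subsets of an
`n`-element set `B`, the weighted sum
`∑_{∅ ≠ A ⊊ B} p(A)·(2|A| + 1 − n)/(|A| + 1)` is nonnegative. -/
theorem weighted_sum_nonneg {α : Type*} [DecidableEq α] (B : Finset α)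
    (n : ℕ) (hn : 1 ≤ n) (hB : B.card = n) (p : Finset α → ℝ)
    (hpos : ∀ A : Finset α, A ⊆ B → 0 ≤ p A)
    (hmono : ∀ A A' : Finset α, A ⊆ A' → A' ⊆ B → p A ≤ p A') :
    0 ≤ ∑ A ∈ B.powerset.filter (fun A => A.Nonempty ∧ A ≠ B),
        p A * ((2 * A.card + 1 - n : ℝ) / (A.card + 1)) := by
  subst hB
  set n := B.card with hn' 
  set T : ℕ → ℝ := fun m => ∑ A ∈ B.powersetCard m, p A with hT
  set a : ℕ → ℝ := fun m => if m = 0 then 0 else T m / (n.choose m) with ha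
  set lam : ℕ → ℝ := fun m => (2*m+1-n)/(m+1) * (n.choose m) with hlam
  have hTnonneg : ∀ m, 0 ≤ T m := by
    intro m
    apply Finset.sum_nonneg
    intro A hA
    exact hpos A (mem_powersetCard.1 hA).1
  have hstep1 : ∀ m, m + 1 ≤ n → a m ≤ a (m+1) := by
    intro m hm
    rcases Nat.eq_zero_or_pos m with rfl | hm0
    · simp only [ha]
      norm_num
      exact div_nonneg (hTnonneg 1) (Nat.cast_nonneg _)
    · have hC1 : (0:ℝ) < n.choose m := by
        exact_mod_cast Nat.choose_pos (by omega)
      have hC2 : (0:ℝ) < n.choose (m+1) := by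
        exact_mod_cast Nat.choose_pos (by omega)
      have hid : ((n.choose (m+1) : ℝ)) * (m+1) = (n.choose m) * ((n:ℝ) - m) := by
        have := Nat.choose_succ_right_eq n m
        have h2 : ((n.choose (m+1) * (m+1) : ℕ) : ℝ) = ((n.choose m * (n - m) : ℕ) : ℝ) := by
          rw [this]
        push_cast [Nat.cast_sub (by omega : m ≤ n)] at h2
        exact h2
      have hds := aux_step B p hpos hmono m hm
      simp only [ha, if_neg (by omega : m ≠ 0), if_neg (by omega : m + 1 ≠ 0)]
      rw [div_le_div_iff₀ hC1 hC2]
      have hmp : (0:ℝ) < (m:ℝ) + 1 := by positivity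
      rw [← mul_le_mul_iff_of_pos_right hmp]
      calc T m * ↑(n.choose (m+1)) * ((m:ℝ)+1) = ((n:ℝ) - m) * T m * (n.choose m) := by
            rw [mul_assoc, hid]; ring
        _ ≤ ((m:ℝ)+1) * T (m+1) * (n.choose m) := by
            apply mul_le_mul_of_nonneg_right _ hC1.le
            simpa [hT] using hds
        _ = T (m+1) * ↑(n.choose m) * ((m:ℝ)+1) := by ring
  have amono : ∀ i j : ℕ, i ≤ j → j ≤ n → a i ≤ a j := by
    intro i j
    induction j with
    | zero => intro h _; rw [Nat.le_zero.1 h]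
    | succ j ih =>
      intro hij hjn
      rcases Nat.eq_or_lt_of_le hij with rfl | hlt
      · exact le_refl _
      · exact (ih (by omega) (by omega)).trans (hstep1 j hjn)
  have lamkey : ∀ m k : ℕ, m + k + 1 = n → lam k = -lam m := by
    intro m k hmk
    have hCk : (n.choose k : ℝ) * ((m:ℝ)+1) = (n.choose m : ℝ) * ((k:ℝ)+1) := by
      have h1 : n.choose k = n.choose (m+1) := Nat.choose_symm_of_eq_add (by omega)
      have h2 := Nat.choose_succ_right_eq n m
      have h3 : n - m = k + 1 := by omega
      rw [h3] at h2
      rw [h1]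
      exact_mod_cast h2
    have hm1 : ((m:ℝ)+1) ≠ 0 := by positivity
    have hk1 : ((k:ℝ)+1) ≠ 0 := by positivity
    have hnr : (n:ℝ) = (m:ℝ) + (k:ℝ) + 1 := by exact_mod_cast congrArg (Nat.cast : ℕ → ℝ) hmk.symm
    simp only [hlam, hnr]
    field_simp
    nlinarith [hCk]
  have hsign : ∀ m k : ℕ, m + k + 1 = n → m ≤ k → lam m ≤ 0 := by
    intro m k hmk hle
    simp only [hlam]
    apply mul_nonpos_of_nonpos_of_nonneg
    · apply div_nonpos_of_nonpos_of_nonneg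
      · have : (2*m+1 : ℝ) ≤ n := by
          have : 2*m+1 ≤ n := by omega
          exact_mod_cast this
        linarith
      · positivity
    · positivity
  -- rewrite the sum
  have hset : B.powerset.filter (fun A => A.Nonempty ∧ A ≠ B)
      = (Finset.Ico 1 n).biUnion (fun m => B.powersetCard m) := by
    ext A
    simp only [mem_filter, mem_powerset, mem_biUnion, Finset.mem_Ico, mem_powersetCard]
    constructor
    · rintro ⟨hsub, hne, hAB⟩
      refine ⟨A.card, ⟨card_pos.2 hne, ?_⟩, hsub, rfl⟩
      rcases Nat.lt_or_ge A.card n with h | h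
      · exact h
      · exact absurd (Finset.eq_of_subset_of_card_le hsub h) hAB
    · rintro ⟨m, ⟨hm1, hm2⟩, hsub, hcard⟩
      refine ⟨hsub, card_pos.1 (by omega), ?_⟩
      intro hEq
      rw [hEq] at hcard
      omega
  have hdisj : (↑(Finset.Ico 1 n) : Set ℕ).PairwiseDisjoint (fun m => B.powersetCard m) := by
    intro i _ j _ hij
    apply Finset.disjoint_left.2
    intro A hAi hAj
    rw [mem_powersetCard] at hAi hAj
    exact hij (hAi.2 ▸ hAj.2 ▸ rfl)
  have hsum : ∑ A ∈ B.powerset.filter (fun A => A.Nonempty ∧ A ≠ B),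
        p A * ((2 * A.card + 1 - n : ℝ) / (A.card + 1))
      = ∑ m ∈ Finset.range n, lam m * a m := by
    rw [hset, Finset.sum_biUnion hdisj,
      Finset.sum_range_eq_add_Ico _ (by omega : 0 < n)]
    have h0 : lam 0 * a 0 = 0 := by simp [ha]
    rw [h0, zero_add]
    apply Finset.sum_congr rfl
    intro m hm
    rw [Finset.mem_Ico] at hm
    have hCm : (n.choose m : ℝ) ≠ 0 := by
      have := Nat.choose_pos (show m ≤ n by omega)
      positivity
    have : ∑ A ∈ B.powersetCard m, p A * ((2 * A.card + 1 - n : ℝ) / (A.card + 1))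
        = T m * ((2 * m + 1 - n : ℝ) / (m + 1)) := by
      rw [hT]
      simp only
      rw [Finset.sum_mul]
      apply Finset.sum_congr rfl
      intro A hA
      rw [(mem_powersetCard.1 hA).2]
    rw [this]
    simp only [hlam, ha, if_neg (by omega : m ≠ 0)]
    field_simp
  rw [hsum]
  set S := ∑ m ∈ Finset.range n, lam m * a m with hS
  have hrefl : S = ∑ m ∈ Finset.range n, lam (n - 1 - m) * a (n - 1 - m) :=
    (Finset.sum_range_reflect (fun j => lam j * a j) n).symm
  have h2 : 0 ≤ S + S := by
    nth_rewrite 2 [hrefl]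
    rw [hS, ← Finset.sum_add_distrib]
    apply Finset.sum_nonneg
    intro m hm
    rw [Finset.mem_range] at hm
    set k := n - 1 - m with hk
    have hmk : m + k + 1 = n := by omega
    have hlk : lam k = -lam m := lamkey m k hmk
    rw [hlk]
    have hterm : lam m * a m + -lam m * a k = lam m * (a m - a k) := by ring
    rw [hterm]
    rcases le_or_gt m k with hle | hlt
    · have h1 := hsign m k hmk hle
      have h2 := amono m k hle (by omega)
      nlinarith
    · have hlamm : 0 ≤ lam m := by
        have h1 := hsign k m (by omega) (by omega)
        have h2 := lamkey k m (by omega)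
        linarith
      apply mul_nonneg hlamm
      have := amono k m (by omega) (by omega)
      linarith
  linarith
end

section
/- Let I be a nonempty finite set and v, w : P(I) → ℝ where P(I) is the set of nonempty subsets of I. Then the following are equivalent: (I) there is no z ∈ ℝ^I with v(C) ≤ ∑_{i∈C} z_i < w(C) for every C ∈ P(I); (II) there exist nonzero nonnegative vectors λ, μ ∈ ℝ₊^{P(I)} such that ∑_C λ_C · 𝟙_C = ∑_C μ_C · 𝟙_C (as vectors in ℝ^I) and ∑_C λ_C v(C) ≥ ∑_C μ_C w(C). -/
open Finset

section AuxAlternative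

variable {I : Type*} [Fintype I] [DecidableEq I]

/-- indicator vector of a finite set -/
noncomputable def indVec (C : Finset I) : I → ℝ := fun i => if i ∈ C then 1 else 0

lemma indVec_inj {C D : Finset I} (h : indVec C = indVec D) : C = D := by
  ext i
  have hi := congrFun h i
  simp only [indVec] at hi
  constructor <;> intro hmem
  · by_contra hD
    simp [hmem, hD] at hi
  · by_contra hC
    simp [hmem, hC] at hi

lemma indVec_ne_neg {C D : Finset I} (hC : C.Nonempty) : indVec C ≠ -(indVec D) := by
  obtain ⟨i, hi⟩ := hC
  intro h
  have hi2 := congrFun h i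
  simp only [indVec, Pi.neg_apply, hi, if_true] at hi2
  split_ifs at hi2 <;> norm_num at hi2

lemma swap_sum (P : Finset (Finset I)) (c : Finset I → ℝ) (z : I → ℝ) :
    ∑ C ∈ P, c C * ∑ i ∈ C, z i =
      ∑ i, (∑ C ∈ P, if i ∈ C then c C else 0) * z i := by
  calc ∑ C ∈ P, c C * ∑ i ∈ C, z i
      = ∑ C ∈ P, ∑ i, (if i ∈ C then c C * z i else 0) := by
        refine Finset.sum_congr rfl fun C _ => ?_
        rw [Finset.sum_ite_mem, Finset.univ_inter, Finset.mul_sum]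
    _ = ∑ i, ∑ C ∈ P, (if i ∈ C then c C * z i else 0) := Finset.sum_comm
    _ = ∑ i, (∑ C ∈ P, if i ∈ C then c C else 0) * z i := by
        refine Finset.sum_congr rfl fun i _ => ?_
        rw [Finset.sum_mul]
        exact Finset.sum_congr rfl fun C _ => by rw [ite_mul, zero_mul]

lemma clm_apply_eq (f : ((I → ℝ) × ℝ) →L[ℝ] ℝ) (x : I → ℝ) (t : ℝ) :
    f (x, t) = (∑ i, x i * f (Pi.single i 1, 0)) + t * f (0, 1) := by
  have hx : (x, t) = (∑ i, x i • ((Pi.single i 1 : I → ℝ), (0 : ℝ)))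
      + t • ((0 : I → ℝ), (1 : ℝ)) := by
    have h1 : ∑ i, x i • (Pi.single i (1:ℝ) : I → ℝ) = x := by
      funext j
      simp [Finset.sum_apply, Pi.single_apply, mul_ite, Finset.sum_ite_eq]
    apply Prod.ext
    · rw [Prod.fst_add, Prod.fst_sum]
      simpa using h1.symm
    · rw [Prod.snd_add, Prod.snd_sum]
      simp
  rw [hx, map_add, map_sum, map_smul]
  simp only [map_smul, smul_eq_mul]

end AuxAlternative

/-- Theorem of the alternative: for `v, w` defined on the nonempty subsets of
a nonempty finite set `I`, there is no `z ∈ ℝ^I` with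
`v(C) ≤ ∑_{i∈C} z_i < w(C)` for all nonempty `C ⊆ I` if and only if there
exist nonzero nonnegative weights `λ, μ` on the nonempty subsets with
`∑_C λ_C 𝟙_C = ∑_C μ_C 𝟙_C` and `∑_C λ_C v(C) ≥ ∑_C μ_C w(C)`. -/
theorem alternative_for_subset_system {I : Type*} [Fintype I] [DecidableEq I]
    [Nonempty I] (v w : Finset I → ℝ) :
    (¬ ∃ z : I → ℝ, ∀ C : Finset I, C.Nonempty →
        v C ≤ ∑ i ∈ C, z i ∧ ∑ i ∈ C, z i < w C) ↔
      (∃ lam mu : Finset I → ℝ,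
        (∀ C, 0 ≤ lam C) ∧ (∀ C, 0 ≤ mu C) ∧
        (∃ C : Finset I, C.Nonempty ∧ lam C ≠ 0) ∧
        (∃ C : Finset I, C.Nonempty ∧ mu C ≠ 0) ∧
        (∀ i : I,
          (∑ C ∈ (Finset.univ : Finset (Finset I)).filter Finset.Nonempty,
            (if i ∈ C then lam C else 0)) =
          ∑ C ∈ (Finset.univ : Finset (Finset I)).filter Finset.Nonempty,
            (if i ∈ C then mu C else 0)) ∧
        (∑ C ∈ (Finset.univ : Finset (Finset I)).filter Finset.Nonempty,
            lam C * v C) ≥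
          ∑ C ∈ (Finset.univ : Finset (Finset I)).filter Finset.Nonempty,
            mu C * w C) := by
  classical
  set P : Finset (Finset I) := (Finset.univ : Finset (Finset I)).filter Finset.Nonempty
    with hPdef
  have hmemP : ∀ {C : Finset I}, C ∈ P ↔ C.Nonempty := by
    intro C
    simp [hPdef]
  constructor
  · -- hard direction
    intro hno
    by_contra hII
    apply hno
    -- the points of the system
    set p : Finset I × Bool → (I → ℝ) × ℝ :=
      fun j => cond j.2 (-(indVec j.1), w j.1) (indVec j.1, -(v j.1)) with hpdef
    set J : Finset (Finset I × Bool) := P ×ˢ Finset.univ with hJdef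
    set s : Finset ((I → ℝ) × ℝ) := J.image p with hsdef
    have hpinj : ∀ a ∈ J, ∀ b ∈ J, p a = p b → a = b := by
      rintro ⟨C, bc⟩ ha ⟨D, bd⟩ hb h
      have hCne : C.Nonempty := hmemP.1 (Finset.mem_product.1 ha).1
      have hDne : D.Nonempty := hmemP.1 (Finset.mem_product.1 hb).1
      cases bc <;> cases bd <;>
        simp only [hpdef, cond_true, cond_false, Prod.mk.injEq] at h
      · rw [indVec_inj h.1]
      · exact absurd h.1 (indVec_ne_neg hCne)
      · exact absurd h.1.symm (indVec_ne_neg hDne)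
      · rw [indVec_inj (neg_injective h.1)]
    -- disjointness of the hull from the ray
    have hdisj : Disjoint ({(0 : I → ℝ)} ×ˢ Set.Iic (0 : ℝ))
        (convexHull ℝ (↑s : Set ((I → ℝ) × ℝ))) := by
      rw [Set.disjoint_left]
      rintro ⟨x1, x2⟩ hxL hxK
      rw [Set.mem_prod, Set.mem_singleton_iff] at hxL
      obtain ⟨hx1, hx2⟩ := hxL
      rw [Finset.convexHull_eq] at hxK
      obtain ⟨W, hW0, hW1, hWc⟩ := hxK
      rw [Finset.centerMass_eq_of_sum_1 _ _ hW1] at hWc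
      simp only [id] at hWc
      rw [hsdef, Finset.sum_image hpinj, hJdef, Finset.sum_product] at hWc
      rw [hsdef, Finset.sum_image hpinj, hJdef, Finset.sum_product] at hW1
      simp only [Fintype.sum_bool, hpdef, cond_true, cond_false] at hWc hW1
      set lam : Finset I → ℝ :=
        fun C => if C.Nonempty then W (indVec C, -(v C)) else 0 with hlamdef
      set mu : Finset I → ℝ :=
        fun C => if C.Nonempty then W (-(indVec C), w C) else 0 with hmudef
      have hlam_memP : ∀ C ∈ P, lam C = W (indVec C, -(v C)) := by
        intro C hC; simp [hlamdef, hmemP.1 hC]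
      have hmu_memP : ∀ C ∈ P, mu C = W (-(indVec C), w C) := by
        intro C hC; simp [hmudef, hmemP.1 hC]
      have hmemJ : ∀ (C : Finset I) (b : Bool), C.Nonempty → (C, b) ∈ J := by
        intro C b hC
        exact Finset.mem_product.2 ⟨hmemP.2 hC, Finset.mem_univ _⟩
      have hmemsl : ∀ C : Finset I, C.Nonempty → (indVec C, -(v C)) ∈ s := by
        intro C hC
        rw [hsdef]
        exact Finset.mem_image_of_mem p (hmemJ C false hC)
      have hmemsm : ∀ C : Finset I, C.Nonempty → (-(indVec C), w C) ∈ s := by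
        intro C hC
        rw [hsdef]
        exact Finset.mem_image_of_mem p (hmemJ C true hC)
      have hlam0 : ∀ C, 0 ≤ lam C := by
        intro C
        simp only [hlamdef]
        split_ifs with h
        · exact hW0 _ (hmemsl C h)
        · exact le_refl 0
      have hmu0 : ∀ C, 0 ≤ mu C := by
        intro C
        simp only [hmudef]
        split_ifs with h
        · exact hW0 _ (hmemsm C h)
        · exact le_refl 0
      -- sum of weights is 1
      have hsum1 : ∑ C ∈ P, (mu C + lam C) = 1 := by
        rw [← hW1]
        refine Finset.sum_congr rfl fun C hC => ?_
        rw [hmu_memP C hC, hlam_memP C hC]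
      -- coordinate equations
      have hcoord : ∀ i : I,
          (∑ C ∈ P, (if i ∈ C then lam C else 0)) =
            ∑ C ∈ P, (if i ∈ C then mu C else 0) := by
        intro i
        have hfst := congrArg (fun q : (I → ℝ) × ℝ => q.1 i) hWc
        simp only [Prod.fst_sum, Prod.fst_add, Prod.smul_fst, Finset.sum_apply,
          Pi.add_apply, Pi.smul_apply, Pi.neg_apply, smul_eq_mul, hx1,
          Pi.zero_apply] at hfst
        have hterm : ∀ C ∈ P,
            W (-(indVec C), w C) * -indVec C i + W (indVec C, -(v C)) * indVec C i
              = (if i ∈ C then lam C else 0) - (if i ∈ C then mu C else 0) := by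
          intro C hC
          rw [hlam_memP C hC, hmu_memP C hC]
          simp only [indVec]
          by_cases h : i ∈ C <;> simp [h] <;> ring
        have hx1i : x1 i = 0 := by
          have hx1' : x1 = 0 := hx1
          rw [hx1']
          rfl
        have hA := (Finset.sum_congr rfl hterm).symm.trans hfst
        rw [hx1i, Finset.sum_sub_distrib] at hA
        linarith [hA]
      -- objective inequality
      have hobj : (∑ C ∈ P, lam C * v C) ≥ ∑ C ∈ P, mu C * w C := by
        have hsnd := congrArg Prod.snd hWc
        simp only [Prod.snd_sum, Prod.snd_add, Prod.smul_snd, smul_eq_mul] at hsnd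
        have hterm : ∀ C ∈ P,
            W (-(indVec C), w C) * w C + W (indVec C, -(v C)) * -(v C)
              = mu C * w C - lam C * v C := by
          intro C hC
          rw [hlam_memP C hC, hmu_memP C hC]
          ring
        rw [Finset.sum_congr rfl hterm, Finset.sum_sub_distrib] at hsnd
        have : x2 ≤ 0 := hx2
        linarith [hsnd]
      -- existence of a nonzero mu
      have hmune : ∃ C : Finset I, C.Nonempty ∧ mu C ≠ 0 := by
        by_contra h
        push_neg at h
        have hmu_zero : ∀ C ∈ P, mu C = 0 := fun C hC => h C (hmemP.1 hC)
        have hlsum : ∑ C ∈ P, lam C = 1 := by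
          rw [← hsum1]
          refine (Finset.sum_congr rfl fun C hC => ?_).symm
          rw [hmu_zero C hC, zero_add]
        have : ∃ C ∈ P, lam C ≠ 0 := by
          by_contra hall
          push_neg at hall
          rw [Finset.sum_eq_zero hall] at hlsum
          norm_num at hlsum
        obtain ⟨C₀, hC₀P, hC₀⟩ := this
        obtain ⟨i, hi⟩ := hmemP.1 hC₀P
        have hle : lam C₀ ≤ ∑ C ∈ P, (if i ∈ C then lam C else 0) := by
          have := Finset.single_le_sum
            (f := fun C => if i ∈ C then lam C else 0)
            (fun C _ => by split_ifs; exacts [hlam0 _, le_rfl]) hC₀P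
          simpa [hi] using this
        have hz : ∑ C ∈ P, (if i ∈ C then mu C else 0) = 0 :=
          Finset.sum_eq_zero fun C hC => by rw [hmu_zero C hC]; simp
        have hlampos : 0 < lam C₀ := lt_of_le_of_ne (hlam0 C₀) (Ne.symm hC₀)
        rw [hcoord i, hz] at hle
        linarith
      have hlamne : ∃ C : Finset I, C.Nonempty ∧ lam C ≠ 0 := by
        by_contra h
        push_neg at h
        have hlam_zero : ∀ C ∈ P, lam C = 0 := fun C hC => h C (hmemP.1 hC)
        have hmsum : ∑ C ∈ P, mu C = 1 := by
          rw [← hsum1]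
          refine (Finset.sum_congr rfl fun C hC => ?_).symm
          rw [hlam_zero C hC, add_zero]
        have : ∃ C ∈ P, mu C ≠ 0 := by
          by_contra hall
          push_neg at hall
          rw [Finset.sum_eq_zero hall] at hmsum
          norm_num at hmsum
        obtain ⟨C₀, hC₀P, hC₀⟩ := this
        obtain ⟨i, hi⟩ := hmemP.1 hC₀P
        have hle : mu C₀ ≤ ∑ C ∈ P, (if i ∈ C then mu C else 0) := by
          have := Finset.single_le_sum
            (f := fun C => if i ∈ C then mu C else 0)
            (fun C _ => by split_ifs; exacts [hmu0 _, le_rfl]) hC₀P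
          simpa [hi] using this
        have hz : ∑ C ∈ P, (if i ∈ C then lam C else 0) = 0 :=
          Finset.sum_eq_zero fun C hC => by rw [hlam_zero C hC]; simp
        have hmupos : 0 < mu C₀ := lt_of_le_of_ne (hmu0 C₀) (Ne.symm hC₀)
        rw [← hcoord i, hz] at hle
        linarith
      exact hII ⟨lam, mu, hlam0, hmu0, hlamne, hmune, hcoord, hobj⟩
    -- separate
    obtain ⟨f, u, u', hLlt, huu', hKgt⟩ :=
      geometric_hahn_banach_closed_compact
        ((convex_singleton _).prod (convex_Iic 0))
        (isClosed_singleton.prod isClosed_Iic)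
        (convex_convexHull ℝ _)
        (s.finite_toSet.isCompact_convexHull ℝ)
        hdisj
    set z0 : I → ℝ := fun i => f (Pi.single i 1, 0) with hz0def
    set s0 : ℝ := f ((0 : I → ℝ), 1) with hs0def
    have hdec : ∀ (x : I → ℝ) (t : ℝ),
        f (x, t) = (∑ i, x i * z0 i) + t * s0 := fun x t => clm_apply_eq f x t
    have hft : ∀ t : ℝ, f ((0 : I → ℝ), t) = t * s0 := by
      intro t
      rw [hdec]
      simp
    have hu0 : 0 < u := by
      have hlt := hLlt ((0 : I → ℝ), (0 : ℝ))
        (Set.mem_prod.2 ⟨rfl, Set.mem_Iic.2 le_rfl⟩)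
      rw [hft, zero_mul] at hlt
      exact hlt
    have hs0nn : 0 ≤ s0 := by
      by_contra hneg
      push_neg at hneg
      have hq : u / s0 < 0 := div_neg_of_pos_of_neg hu0 hneg
      have hmem : ((0 : I → ℝ), u / s0 - 1) ∈ ({(0 : I → ℝ)} ×ˢ Set.Iic (0 : ℝ)) :=
        Set.mem_prod.2 ⟨rfl, Set.mem_Iic.2 (by linarith)⟩
      have hlt := hLlt _ hmem
      rw [hft] at hlt
      have hc : (u / s0 - 1) * s0 = u - s0 := by
        have hne : s0 ≠ 0 := ne_of_lt hneg
        field_simp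
      linarith
    have hrow1 : ∀ C : Finset I, C.Nonempty →
        u' < (∑ i ∈ C, z0 i) - v C * s0 := by
      intro C hC
      have hmem : ((indVec C, -(v C)) : (I → ℝ) × ℝ) ∈
          convexHull ℝ (↑s : Set ((I → ℝ) × ℝ)) := by
        apply subset_convexHull ℝ _
        rw [Finset.mem_coe, hsdef]
        have hJm : (C, false) ∈ J := Finset.mem_product.2 ⟨hmemP.2 hC, Finset.mem_univ _⟩
        exact Finset.mem_image_of_mem p hJm
      have hgt := hKgt _ hmem
      rw [hdec] at hgt
      have hI : ∑ i, indVec C i * z0 i = ∑ i ∈ C, z0 i := by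
        simp only [indVec, ite_mul, one_mul, zero_mul]
        rw [Finset.sum_ite_mem, Finset.univ_inter]
      rw [hI] at hgt
      linarith
    have hrow2 : ∀ C : Finset I, C.Nonempty →
        u' < -(∑ i ∈ C, z0 i) + w C * s0 := by
      intro C hC
      have hmem : ((-(indVec C), w C) : (I → ℝ) × ℝ) ∈
          convexHull ℝ (↑s : Set ((I → ℝ) × ℝ)) := by
        apply subset_convexHull ℝ _
        rw [Finset.mem_coe, hsdef]
        have hJm : (C, true) ∈ J := Finset.mem_product.2 ⟨hmemP.2 hC, Finset.mem_univ _⟩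
        exact Finset.mem_image_of_mem p hJm
      have hgt := hKgt _ hmem
      rw [hdec] at hgt
      have hI : ∑ i, (-(indVec C)) i * z0 i = -(∑ i ∈ C, z0 i) := by
        have hterm : ∀ i, (-(indVec C)) i * z0 i = -(if i ∈ C then z0 i else 0) := by
          intro i
          simp only [Pi.neg_apply, indVec, neg_mul, ite_mul, one_mul, zero_mul]
        rw [Finset.sum_congr rfl fun i _ => hterm i, Finset.sum_neg_distrib,
          Finset.sum_ite_mem, Finset.univ_inter]
      rw [hI] at hgt
      linarith
    have hs0pos : 0 < s0 := by
      rcases hs0nn.lt_or_eq with h | h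
      · exact h
      · exfalso
        have h1 := hrow1 Finset.univ Finset.univ_nonempty
        have h2 := hrow2 Finset.univ Finset.univ_nonempty
        rw [← h] at h1 h2
        simp only [mul_zero] at h1 h2
        linarith
    refine ⟨fun i => z0 i / s0, fun C hC => ⟨?_, ?_⟩⟩
    · have h1 := hrow1 C hC
      have hsum : ∑ i ∈ C, z0 i / s0 = (∑ i ∈ C, z0 i) / s0 := by
        rw [Finset.sum_div]
      rw [hsum, le_div_iff₀ hs0pos]
      linarith
    · have h2 := hrow2 C hC
      have hsum : ∑ i ∈ C, z0 i / s0 = (∑ i ∈ C, z0 i) / s0 := by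
        rw [Finset.sum_div]
      rw [hsum, div_lt_iff₀ hs0pos]
      linarith
  · -- easy direction
    rintro ⟨lam, mu, hlam0, hmu0, ⟨C₁, hC₁ne, hC₁⟩, ⟨C₂, hC₂ne, hC₂⟩, hcoord, hge⟩
      ⟨z, hz⟩
    have h1 : ∑ C ∈ P, lam C * v C ≤ ∑ C ∈ P, lam C * ∑ i ∈ C, z i :=
      Finset.sum_le_sum fun C hC =>
        mul_le_mul_of_nonneg_left (hz C (hmemP.1 hC)).1 (hlam0 C)
    have h2 : ∑ C ∈ P, lam C * ∑ i ∈ C, z i = ∑ C ∈ P, mu C * ∑ i ∈ C, z i := by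
      rw [swap_sum, swap_sum]
      exact Finset.sum_congr rfl fun i _ => by rw [hcoord i]
    have h3 : ∑ C ∈ P, mu C * ∑ i ∈ C, z i < ∑ C ∈ P, mu C * w C := by
      apply Finset.sum_lt_sum
      · exact fun C hC =>
          mul_le_mul_of_nonneg_left (le_of_lt (hz C (hmemP.1 hC)).2) (hmu0 C)
      · exact ⟨C₂, hmemP.2 hC₂ne,
          mul_lt_mul_of_pos_left (hz C₂ hC₂ne).2
            (lt_of_le_of_ne (hmu0 C₂) (Ne.symm hC₂))⟩
    linarith [hge]
end

section
/- Let p : [0,1]^k → [0, ∞] be submodular with p(𝟎) = 0, and define b : ℝ₊^k → ℝ by b(x) = sup_{g ∈ [0,1]^k} (g·x − p(g)) (assumed finite). Then b is supermodular: b(x) + b(y) ≤ b(x∨y) + b(x∧y) for all x, y ∈ ℝ₊^k. -/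
open scoped ENNReal

/-- Scalar rearrangement inequality. -/
lemma scalar_rearrange {a c x y : ℝ} (hx : 0 ≤ x) (hy : 0 ≤ y) :
    a * x + c * y ≤ max a c * max x y + min a c * min x y := by
  rcases le_total a c with h1 | h1 <;> rcases le_total x y with h2 | h2 <;>
    simp [max_eq_left, max_eq_right, min_eq_left, min_eq_right, h1, h2] <;> nlinarith

/-- If `p : [0,1]^k → [0,∞]` is submodular with `p(𝟎) = 0`, then its (assumed
finite) conjugate `b(x) = sup_{g ∈ [0,1]^k} (g·x − p(g))` is supermodular on
ℝ₊^k. -/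
theorem conjugate_of_submodular_is_supermodular {k : ℕ}
    (p : (Fin k → ℝ) → ℝ≥0∞) (b : (Fin k → ℝ) → ℝ)
    (hp0 : p 0 = 0)
    (hsub : ∀ g h : Fin k → ℝ, (∀ i, g i ∈ Set.Icc (0 : ℝ) 1) →
      (∀ i, h i ∈ Set.Icc (0 : ℝ) 1) → p (g ⊔ h) + p (g ⊓ h) ≤ p g + p h)
    (hb : ∀ x : Fin k → ℝ, 0 ≤ x →
      IsLUB {r : ℝ | ∃ g : Fin k → ℝ, (∀ i, g i ∈ Set.Icc (0 : ℝ) 1) ∧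
        p g ≠ ⊤ ∧ r = (∑ i, g i * x i) - (p g).toReal} (b x)) :
    ∀ x y : Fin k → ℝ, 0 ≤ x → 0 ≤ y →
      b x + b y ≤ b (x ⊔ y) + b (x ⊓ y) := by
  intro x y hx hy
  have hxy1 : (0 : Fin k → ℝ) ≤ x ⊔ y := le_trans hx le_sup_left
  have hxy2 : (0 : Fin k → ℝ) ≤ x ⊓ y := le_inf hx hy
  set C := b (x ⊔ y) + b (x ⊓ y) with hC
  -- key: for members r of S_x and s of S_y, r + s ≤ C
  have key : ∀ r ∈ {r : ℝ | ∃ g : Fin k → ℝ, (∀ i, g i ∈ Set.Icc (0 : ℝ) 1) ∧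
        p g ≠ ⊤ ∧ r = (∑ i, g i * x i) - (p g).toReal},
      ∀ s ∈ {r : ℝ | ∃ g : Fin k → ℝ, (∀ i, g i ∈ Set.Icc (0 : ℝ) 1) ∧
        p g ≠ ⊤ ∧ r = (∑ i, g i * y i) - (p g).toReal},
      r + s ≤ C := by
    rintro r ⟨g, hg, hpg, rfl⟩ s ⟨h, hh, hph, rfl⟩
    have hgh : p (g ⊔ h) + p (g ⊓ h) ≤ p g + p h := hsub g h hg hh
    have htop : p g + p h ≠ ⊤ := ENNReal.add_ne_top.2 ⟨hpg, hph⟩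
    have h1 : p (g ⊔ h) ≠ ⊤ :=
      ne_top_of_le_ne_top htop (le_trans le_self_add hgh)
    have h2 : p (g ⊓ h) ≠ ⊤ :=
      ne_top_of_le_ne_top htop (le_trans le_add_self hgh)
    have hghIcc : ∀ i, (g ⊔ h) i ∈ Set.Icc (0 : ℝ) 1 := by
      intro i
      simp only [Pi.sup_apply]
      exact ⟨le_max_of_le_left (hg i).1, max_le (hg i).2 (hh i).2⟩
    have hghIcc' : ∀ i, (g ⊓ h) i ∈ Set.Icc (0 : ℝ) 1 := by
      intro i
      simp only [Pi.inf_apply]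
      exact ⟨le_min (hg i).1 (hh i).1, min_le_of_left_le (hg i).2⟩
    have mem1 : (∑ i, (g ⊔ h) i * (x ⊔ y) i) - (p (g ⊔ h)).toReal ≤ b (x ⊔ y) :=
      (hb _ hxy1).1 ⟨g ⊔ h, hghIcc, h1, rfl⟩
    have mem2 : (∑ i, (g ⊓ h) i * (x ⊓ y) i) - (p (g ⊓ h)).toReal ≤ b (x ⊓ y) :=
      (hb _ hxy2).1 ⟨g ⊓ h, hghIcc', h2, rfl⟩
    have hsum : (∑ i, g i * x i) + (∑ i, h i * y i) ≤
        (∑ i, (g ⊔ h) i * (x ⊔ y) i) + (∑ i, (g ⊓ h) i * (x ⊓ y) i) := by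
      rw [← Finset.sum_add_distrib, ← Finset.sum_add_distrib]
      apply Finset.sum_le_sum
      intro i _
      simpa [Pi.sup_apply, Pi.inf_apply] using
        scalar_rearrange (a := g i) (c := h i) (hx i) (hy i)
    have hpr : (p (g ⊔ h)).toReal + (p (g ⊓ h)).toReal ≤
        (p g).toReal + (p h).toReal := by
      rw [← ENNReal.toReal_add h1 h2, ← ENNReal.toReal_add hpg hph]
      exact ENNReal.toReal_le_toReal (ENNReal.add_ne_top.2 ⟨h1, h2⟩) htop |>.2 hgh
    rw [hC]
    linarith
  -- conclude using LUB property twice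
  have hbx := hb x hx
  have hby := hb y hy
  have h1 : b x ≤ C - b y := by
    apply hbx.2
    rintro r hr
    have : b y ≤ C - r := by
      apply hby.2
      intro s hs
      have := key r hr s hs
      linarith
    linarith
  linarith
end

section
/- Fix k ≥ 1 and a symmetric deterministic mechanism with nondecreasing supermodular price schedule p : {0,...,k} → ℝ₊, p(0) = 0 (supermodular: d(m) = p(m) − p(m−1) nondecreasing). Suppose nonnegative reals β₁,...,β_k and S ≥ 0 satisfy: for every n ∈ {1,...,k}, d(n) · ∑_{m=n}^{k} m·β_m ≤ S. Then ∑_{m=1}^{k} β_m p(m) ≤ H(k) · S, where H(k) = ∑_{n=1}^k 1/n is the k-th harmonic number. -/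
/-- The computational core of the `H(k)·SymSRev` bound for supermodular
symmetric deterministic mechanisms: if the price schedule `p` is
nondecreasing, supermodular (nondecreasing differences), `p(0) = 0`, the
`β_m ≥ 0`, `S ≥ 0`, and `d(n)·∑_{m=n}^k m·β_m ≤ S` for every `1 ≤ n ≤ k`,
then `∑_{m=1}^k β_m p(m) ≤ H(k)·S`. -/
theorem supermodular_symmetric_harmonic_bound (k : ℕ) (hk : 1 ≤ k)
    (p : ℕ → ℝ) (hp0 : p 0 = 0)
    (hpmono : ∀ m, m < k → p m ≤ p (m + 1))
    (hconv : ∀ m, 1 ≤ m → m < k → p m - p (m - 1) ≤ p (m + 1) - p m)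
    (β : ℕ → ℝ) (hβ : ∀ m, 0 ≤ β m) (S : ℝ) (hS : 0 ≤ S)
    (hkey : ∀ n, 1 ≤ n → n ≤ k →
      (p n - p (n - 1)) * ∑ m ∈ Finset.Icc n k, (m : ℝ) * β m ≤ S) :
    ∑ m ∈ Finset.Icc 1 k, β m * p m ≤ (∑ n ∈ Finset.Icc 1 k, (1 : ℝ) / n) * S := by
  -- d n := p n - p (n-1)
  set d : ℕ → ℝ := fun n => p n - p (n - 1) with hd
  have hd0 : ∀ n, 1 ≤ n → n ≤ k → 0 ≤ d n := by
    intro n h1 h2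
    have := hpmono (n - 1) (by omega)
    have hn : n - 1 + 1 = n := by omega
    rw [hn] at this
    simp [hd]; linarith
  -- telescoping: p m = ∑_{n ∈ Icc 1 m} d n
  have htel : ∀ m, p m = ∑ n ∈ Finset.Icc 1 m, d n := by
    intro m
    induction m with
    | zero => simp [hp0]
    | succ m ih =>
      rw [Finset.sum_Icc_succ_top (by omega), ← ih]
      simp [hd]
  -- rewrite LHS and swap sums
  have hswap : ∑ m ∈ Finset.Icc 1 k, β m * p m
      = ∑ n ∈ Finset.Icc 1 k, d n * ∑ m ∈ Finset.Icc n k, β m := by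
    have h1 : ∀ m, β m * p m = ∑ n ∈ Finset.Icc 1 m, d n * β m := by
      intro m
      rw [htel m, Finset.mul_sum]
      exact Finset.sum_congr rfl fun n _ => mul_comm _ _
      -- fixed
    calc ∑ m ∈ Finset.Icc 1 k, β m * p m
        = ∑ m ∈ Finset.Ico 1 (k + 1), ∑ n ∈ Finset.Ico 1 (m + 1), d n * β m := by
          rw [← Finset.Ico_add_one_right_eq_Icc]
          exact Finset.sum_congr rfl fun m _ => by rw [h1 m, Finset.Ico_add_one_right_eq_Icc]
      _ = ∑ n ∈ Finset.Ico 1 (k + 1), ∑ m ∈ Finset.Ico n (k + 1), d n * β m :=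
          (Finset.sum_Ico_Ico_comm 1 (k + 1) fun n m => d n * β m).symm
      _ = ∑ n ∈ Finset.Icc 1 k, d n * ∑ m ∈ Finset.Icc n k, β m := by
          rw [Finset.Ico_add_one_right_eq_Icc]
          exact Finset.sum_congr rfl fun n _ => by
            rw [Finset.Ico_add_one_right_eq_Icc, Finset.mul_sum]
  rw [hswap, Finset.sum_mul]
  apply Finset.sum_le_sum
  intro n hn
  rw [Finset.mem_Icc] at hn
  have hn1 : (1 : ℝ) ≤ (n : ℝ) := by exact_mod_cast hn.1
  have hnpos : (0 : ℝ) < n := by linarith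
  -- d n * ∑ β_m ≤ d n * (1/n) ∑ m β_m ≤ S/n
  have step1 : ∑ m ∈ Finset.Icc n k, β m ≤ (1 / n) * ∑ m ∈ Finset.Icc n k, (m : ℝ) * β m := by
    rw [Finset.mul_sum]
    apply Finset.sum_le_sum
    intro m hm
    rw [Finset.mem_Icc] at hm
    have : (n : ℝ) ≤ (m : ℝ) := by exact_mod_cast hm.1
    rw [← mul_assoc]
    have h2 : (1 : ℝ) ≤ 1 / n * m := by
      rw [div_mul_eq_mul_div, le_div_iff₀ hnpos]; linarith
    nlinarith [hβ m]
  calc d n * ∑ m ∈ Finset.Icc n k, β m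
      ≤ d n * ((1 / n) * ∑ m ∈ Finset.Icc n k, (m : ℝ) * β m) :=
        mul_le_mul_of_nonneg_left step1 (hd0 n hn.1 hn.2)
    _ = (1 / n) * (d n * ∑ m ∈ Finset.Icc n k, (m : ℝ) * β m) := by ring
    _ ≤ (1 / n) * S := by
        apply mul_le_mul_of_nonneg_left (hkey n hn.1 hn.2)
        positivity
    _ = 1 / (n : ℝ) * S := rfl
end

section
/- Let p : {0,1,...,k} → [0, ∞] be nondecreasing with p(0) = 0. Set d(m) = p(m) − p(m−1), d'(m) = max_{1 ≤ n ≤ m} d(n), and p'(m) = ∑_{ℓ=1}^m d'(ℓ) with p'(0) = 0. Then: (a) p ≤ p' pointwise; (b) p' is nondecreasing; (c) d' is nondecreasing (so p' is 'supermodular'/convex as a sequence); and (d) p'(m) ≤ k·p(m) for all 0 ≤ m ≤ k. -/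
open scoped ENNReal

/-- Price differences `d(m) = p(m) − p(m−1)`, with the convention that
`d(m) = ∞` whenever `p(m) = ∞`. -/
noncomputable def priceDiff (p : ℕ → ℝ≥0∞) (m : ℕ) : ℝ≥0∞ :=
  if p m = ⊤ then ⊤ else p m - p (m - 1)

/-- Running maximum `d'(m) = max_{1 ≤ n ≤ m} d(n)` of the price differences. -/
noncomputable def priceDiffSup (p : ℕ → ℝ≥0∞) (m : ℕ) : ℝ≥0∞ :=
  (Finset.Icc 1 m).sup (priceDiff p)

/-- The supermodular majorant `p'(m) = ∑_{ℓ=1}^m d'(ℓ)`, `p'(0) = 0`. -/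
noncomputable def priceMajorant (p : ℕ → ℝ≥0∞) (m : ℕ) : ℝ≥0∞ :=
  ∑ ℓ ∈ Finset.Icc 1 m, priceDiffSup p ℓ

/-- Every nondecreasing price schedule `p : {0,...,k} → [0,∞]` with `p(0) = 0`
is within a factor `k` of a supermodular (convex) one: with
`d(m) = p(m) − p(m−1)`, `d'(m) = max_{n ≤ m} d(n)`, `p'(m) = ∑_{ℓ≤m} d'(ℓ)`,
we have (a) `p ≤ p'`, (b) `p'` nondecreasing, (c) `d'` nondecreasing, and
(d) `p'(m) ≤ k·p(m)` for all `m ≤ k`. -/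
theorem price_schedule_supermodular_approx (k : ℕ) (p : ℕ → ℝ≥0∞)
    (hp0 : p 0 = 0) (hmono : ∀ m, m < k → p m ≤ p (m + 1)) :
    (∀ m, m ≤ k → p m ≤ priceMajorant p m) ∧
      (∀ m m', m ≤ m' → m' ≤ k → priceMajorant p m ≤ priceMajorant p m') ∧
      (∀ m, 1 ≤ m → m < k → priceDiffSup p m ≤ priceDiffSup p (m + 1)) ∧
      (∀ m, m ≤ k → priceMajorant p m ≤ (k : ℝ≥0∞) * p m) := by

  have pmono : ∀ n m, n ≤ m → m ≤ k → p n ≤ p m := by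
    intro n m hnm hmk
    induction m with
    | zero => simp [Nat.le_zero.mp hnm]
    | succ m ih =>
      rcases Nat.lt_or_ge n (m+1) with h | h
      · exact le_trans (ih (Nat.lt_succ_iff.mp h) (le_of_lt hmk))
          (hmono m (Nat.lt_of_succ_le hmk))
      · exact le_of_eq (congrArg p (le_antisymm hnm h))
  have hstep : ∀ m, p (m + 1) ≤ priceDiff p (m + 1) + p m := by
    intro m
    unfold priceDiff
    by_cases h : p (m+1) = ⊤
    · simp [h]
    · simp only [h, if_false, Nat.add_sub_cancel]
      exact le_tsub_add
  have htel : ∀ m, p m ≤ ∑ ℓ ∈ Finset.Icc 1 m, priceDiff p ℓ := by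
    intro m
    induction m with
    | zero => simp [hp0]
    | succ m ih =>
      rw [Finset.sum_Icc_succ_top (Nat.one_le_iff_ne_zero.mpr (Nat.succ_ne_zero m))]
      calc p (m+1) ≤ priceDiff p (m+1) + p m := hstep m
        _ ≤ priceDiff p (m+1) + ∑ ℓ ∈ Finset.Icc 1 m, priceDiff p ℓ := by
            exact add_le_add_right ih _
        _ = _ := add_comm _ _
  have hdle : ∀ ℓ, 1 ≤ ℓ → priceDiff p ℓ ≤ priceDiffSup p ℓ := by
    intro ℓ hℓ
    exact Finset.le_sup (Finset.mem_Icc.mpr ⟨hℓ, le_refl ℓ⟩)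
  have ha : ∀ m, p m ≤ priceMajorant p m := by
    intro m
    refine le_trans (htel m) (Finset.sum_le_sum ?_)
    intro ℓ hℓ
    exact hdle ℓ (Finset.mem_Icc.mp hℓ).1
  have hc : ∀ m m', m ≤ m' → priceDiffSup p m ≤ priceDiffSup p m' := by
    intro m m' h
    exact Finset.sup_mono (Finset.Icc_subset_Icc_right h)
  have hb : ∀ m m', m ≤ m' → priceMajorant p m ≤ priceMajorant p m' := by
    intro m m' h
    exact Finset.sum_le_sum_of_subset (Finset.Icc_subset_Icc_right h)
  have hdp : ∀ n, n ≤ k → priceDiff p n ≤ p n := by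
    intro n hn
    unfold priceDiff
    by_cases h : p n = ⊤
    · simp [h]
    · simp only [h, if_false]
      exact tsub_le_self
  refine ⟨fun m _ => ha m, fun m m' h _ => hb m m' h,
    fun m _ _ => hc m (m+1) (Nat.le_succ m), ?_⟩
  intro m hmk
  have : priceMajorant p m ≤ ∑ _ℓ ∈ Finset.Icc 1 m, p m := by
    refine Finset.sum_le_sum ?_
    intro ℓ hℓ
    obtain ⟨h1, h2⟩ := Finset.mem_Icc.mp hℓ
    refine Finset.sup_le ?_
    intro n hn
    obtain ⟨hn1, hn2⟩ := Finset.mem_Icc.mp hn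
    exact le_trans (hdp n (le_trans (le_trans hn2 h2) hmk))
      (pmono n m (le_trans hn2 h2) hmk)
  refine le_trans this ?_
  rw [Finset.sum_const, Nat.card_Icc]
  simp only [Nat.add_sub_cancel, nsmul_eq_mul]
  exact mul_le_mul_left (by exact_mod_cast hmk) _
end
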